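/- For every nonzero real number a and every (x,y) ∈ ℝ², the map L̃ of Theorem 7.1 satisfies ⟨∂L̃/∂x, ∂L̃/∂x⟩ = 0, ⟨∂L̃/∂y, ∂L̃/∂y⟩ = 0, and ⟨∂L̃/∂x, ∂L̃/∂y⟩ = −1; that is, the induced metric of L̃ is the flat Lorentzian metric −dx⊗dy − dy⊗dx. -/

import Mathlib

open Complex

/-- The index-two Hermitian form
`b(z,w) = −conj z₁ · w₁ − conj z₂ · w₂ + conj z₃ · w₃` on `ℂ³`, over which the
pseudo-hyperbolic space `H⁵₂(−1) = {z : b(z,z) = −1}` and the Hopf fibration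
`π : H⁵₂(−1) → CH²₁(−4)` are defined. -/
noncomputable def bHyp (z w : ℂ × ℂ × ℂ) : ℂ :=
  -(starRingEnd ℂ z.1) * w.1 - (starRingEnd ℂ z.2.1) * w.2.1
    + (starRingEnd ℂ z.2.2) * w.2.2

/-- The horizontal lift `L̃ : ℝ² → ℂ³` of Theorem 7.1. -/
noncomputable def Lch (a x y : ℝ) : ℂ × ℂ × ℂ :=
  ((1 / Real.sqrt 3 : ℝ) : ℂ) •
    (((Real.sqrt 2 : ℝ) : ℂ) * Complex.exp (-(Complex.I * ((x + a ^ 2 * y : ℝ) : ℂ)) / (2 * (a : ℂ)))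
        * ((Real.cosh (Real.sqrt 3 * (x - a ^ 2 * y) / (2 * a)) : ℝ) : ℂ),
     Complex.exp (Complex.I * ((a * y + x / a : ℝ) : ℂ)),
     ((Real.sqrt 2 : ℝ) : ℂ) * Complex.exp (-(Complex.I * ((x + a ^ 2 * y : ℝ) : ℂ)) / (2 * (a : ℂ)))
        * ((Real.sinh (Real.sqrt 3 * (x - a ^ 2 * y) / (2 * a)) : ℝ) : ℂ))

/-!
`L̃` is the map `(θ, φ, u) ↦ (√2 e^{iθ} cosh u, e^{iφ}, √2 e^{iθ} sinh u) / √3` composed with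
phases `θ, φ, u` that are linear in `(x, y)`. Since `|e^{iθ}| = |e^{iφ}| = 1` and
`cosh² u − sinh² u = 1`, the form `Re b` pulls back under this map to the constant form
`(2 du² − 2 dθ² − dφ²) / 3`, and evaluating it on the constant partial derivatives of the
phases gives `0`, `0` and `−1`.
-/

noncomputable def phaseMap (θ φ u : ℝ) : ℂ × ℂ × ℂ :=
  ((1 / Real.sqrt 3 : ℝ) : ℂ) •
    (((Real.sqrt 2 : ℝ) : ℂ) * exp (θ * I) * ((Real.cosh u : ℝ) : ℂ),
     exp (φ * I),
     ((Real.sqrt 2 : ℝ) : ℂ) * exp (θ * I) * ((Real.sinh u : ℝ) : ℂ))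

noncomputable def phaseMapTangent (θ φ u θ' φ' u' : ℝ) : ℂ × ℂ × ℂ :=
  ((1 / Real.sqrt 3 : ℝ) : ℂ) •
    (((Real.sqrt 2 : ℝ) : ℂ) * exp (θ * I) *
        ((θ' : ℂ) * I * ((Real.cosh u : ℝ) : ℂ) + (u' : ℂ) * ((Real.sinh u : ℝ) : ℂ)),
     (φ' : ℂ) * I * exp (φ * I),
     ((Real.sqrt 2 : ℝ) : ℂ) * exp (θ * I) *
        ((θ' : ℂ) * I * ((Real.sinh u : ℝ) : ℂ) + (u' : ℂ) * ((Real.cosh u : ℝ) : ℂ)))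

theorem HasDerivAt.phaseMap {θ φ u : ℝ → ℝ} {θ' φ' u' t : ℝ} (hθ : HasDerivAt θ θ' t)
    (hφ : HasDerivAt φ φ' t) (hu : HasDerivAt u u' t) :
    HasDerivAt (fun t => phaseMap (θ t) (φ t) (u t))
      (phaseMapTangent (θ t) (φ t) (u t) θ' φ' u') t := by
  have hexp {ψ : ℝ → ℝ} {ψ' : ℝ} (h : HasDerivAt ψ ψ' t) :
      HasDerivAt (fun t => Complex.exp ((ψ t : ℂ) * I))
        ((ψ' : ℂ) * I * Complex.exp ((ψ t : ℂ) * I)) t := by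
    simpa [mul_comm] using (h.ofReal_comp.mul_const I).cexp
  have hcosh := hu.cosh.ofReal_comp
  have hsinh := hu.sinh.ofReal_comp
  refine (((((hexp hθ).const_mul _).mul hcosh).congr_deriv ?_).prodMk ((hexp hφ).prodMk
    ((((hexp hθ).const_mul _).mul hsinh).congr_deriv ?_))).const_smul
      ((1 / Real.sqrt 3 : ℝ) : ℂ)
  · push_cast; ring
  · push_cast; ring

theorem re_bHyp_phaseMapTangent (θ φ u θ₁ φ₁ u₁ θ₂ φ₂ u₂ : ℝ) :
    (bHyp (phaseMapTangent θ φ u θ₁ φ₁ u₁) (phaseMapTangent θ φ u θ₂ φ₂ u₂)).re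
      = (2 * u₁ * u₂ - 2 * θ₁ * θ₂ - φ₁ * φ₂) / 3 := by
  simp only [bHyp, phaseMapTangent, Prod.smul_mk, smul_eq_mul, map_mul, map_add,
    conj_ofReal, conj_I, mul_re, mul_im, add_re, add_im, sub_re, neg_re, neg_im, ofReal_re,
    ofReal_im, I_re, I_im, exp_ofReal_mul_I_re, exp_ofReal_mul_I_im, conj_re, conj_im]
  have hk : (1 / Real.sqrt 3) ^ 2 = 1 / 3 := by rw [div_pow, Real.sq_sqrt] <;> norm_num
  have h2 : Real.sqrt 2 ^ 2 = 2 := Real.sq_sqrt (by norm_num)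
  have hθ := Real.cos_sq_add_sin_sq θ
  have hφ := Real.cos_sq_add_sin_sq φ
  have hu := Real.cosh_sq_sub_sinh_sq u
  set k := 1 / Real.sqrt 3
  set e := Real.cos θ ^ 2 + Real.sin θ ^ 2
  set h := Real.cosh u ^ 2 - Real.sinh u ^ 2
  -- the left side expands to `k² (√2² e h (u₁ u₂ − θ₁ θ₂) − (cos² φ + sin² φ) φ₁ φ₂)`
  linear_combination k ^ 2 * (u₁ * u₂ - θ₁ * θ₂) * (e * h * h2 + 2 * h * hθ + 2 * hu)
    + (2 * (u₁ * u₂ - θ₁ * θ₂) - φ₁ * φ₂) * hk - k ^ 2 * φ₁ * φ₂ * hφ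

theorem Lch_eq_phaseMap (a x y : ℝ) :
    Lch a x y = phaseMap (-(x + a ^ 2 * y) / (2 * a)) (a * y + x / a)
      (Real.sqrt 3 * (x - a ^ 2 * y) / (2 * a)) := by
  have hθ : -(I * ((x + a ^ 2 * y : ℝ) : ℂ)) / (2 * (a : ℂ))
      = ((-(x + a ^ 2 * y) / (2 * a) : ℝ) : ℂ) * I := by push_cast; ring
  rw [Lch, phaseMap, hθ, mul_comm I]

/-- Theorem 7.1: the induced metric of `L̃` is the flat Lorentzian metric
`−dx⊗dy − dy⊗dx`. -/
theorem Lch_induced_metric (a : ℝ) (ha : a ≠ 0) :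
    ∀ x y : ℝ,
      (bHyp (deriv (fun t => Lch a t y) x) (deriv (fun t => Lch a t y) x)).re = 0 ∧
      (bHyp (deriv (fun t => Lch a x t) y) (deriv (fun t => Lch a x t) y)).re = 0 ∧
      (bHyp (deriv (fun t => Lch a t y) x) (deriv (fun t => Lch a x t) y)).re = -1 := by
  intro x y
  have hid (s : ℝ) : HasDerivAt (fun t : ℝ => t) 1 s := hasDerivAt_id' s
  have hx := HasDerivAt.phaseMap (((hid x).add_const (a ^ 2 * y)).fun_neg.div_const (2 * a))
    (((hid x).div_const a).const_add (a * y))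
    ((((hid x).sub_const (a ^ 2 * y)).const_mul (Real.sqrt 3)).div_const (2 * a))
  have hy := HasDerivAt.phaseMap
    ((((hid y).const_mul (a ^ 2)).const_add x).fun_neg.div_const (2 * a))
    (((hid y).const_mul a).add_const (x / a))
    (((((hid y).const_mul (a ^ 2)).const_sub x).const_mul (Real.sqrt 3)).div_const (2 * a))
  simp only [← Lch_eq_phaseMap] at hx hy
  rw [hx.deriv, hy.deriv, re_bHyp_phaseMapTangent, re_bHyp_phaseMapTangent,
    re_bHyp_phaseMapTangent]
  have h3 : Real.sqrt 3 ^ 2 = 3 := Real.sq_sqrt (by norm_num)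
  refine ⟨?_, ?_, ?_⟩
  · field_simp
    linear_combination h3
  · field_simp
    linear_combination a ^ 2 * h3
  · field_simp
    linear_combination -h3
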